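/- Let A and B be valuation rings (local integral domains) and suppose τ : MR(A) → MR(B) is a multiplicative bijection for which there exists a field isomorphism τ̄ : A/m_A → B/m_B with τ̄ ∘ s_A = s_B ∘ τ. Then τ induces an isomorphism of ordered abelian groups between the value groups Frac(A)^×/A^× and Frac(B)^×/B^×. -/

import Mathlib

open IsLocalRing

variable (A : Type*) [CommRing A] [IsLocalRing A]

/-- `z ~ z'` iff `z' ∈ z·(1 + m)`, where `m` is the maximal ideal. -/
def mrel : A → A → Prop := fun z z' => ∃ u ∈ maximalIdeal A, z' = z * (1 + u)
/-- The set of multiplicative residues `MR(A) = A/(1+m)`. -/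
def MR : Type _ := Quot (mrel A)

variable {A}

/-- The multiplicative residue of an element of `A`. -/
def mres (a : A) : MR A := Quot.mk _ a

lemma mrel_refl (a : A) : mrel A a a := ⟨0, zero_mem _, by ring⟩

lemma mrel_mul {z z' w w' : A} (h1 : mrel A z z') (h2 : mrel A w w') :
    mrel A (z * w) (z' * w') := by
  obtain ⟨u, hu, rfl⟩ := h1
  obtain ⟨v, hv, rfl⟩ := h2
  exact ⟨u + v + u * v, add_mem (add_mem hu hv) (Ideal.mul_mem_right _ _ hu), by ring⟩

/-- The commutative monoid structure on `MR(A)` induced by multiplication on `A`. -/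
noncomputable instance : CommMonoid (MR A) where
  mul := Quot.map₂ (· * ·) (fun _ _ _ h => mrel_mul (mrel_refl _) h)
    (fun _ _ _ h => mrel_mul h (mrel_refl _))
  one := mres (1 : A)
  mul_assoc := by rintro ⟨a⟩ ⟨b⟩ ⟨c⟩; exact congrArg (Quot.mk _) (mul_assoc a b c)
  one_mul := by rintro ⟨a⟩; exact congrArg (Quot.mk _) (one_mul a)
  mul_one := by rintro ⟨a⟩; exact congrArg (Quot.mk _) (mul_one a)
  mul_comm := by rintro ⟨a⟩ ⟨b⟩; exact congrArg (Quot.mk _) (mul_comm a b)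

/-- The natural multiplicative map `s_A : MR(A) → A/m`. -/
noncomputable def sA : MR A → A ⧸ maximalIdeal A :=
  Quot.lift (residue A) (by
    rintro a b ⟨u, hu, rfl⟩
    have h0 : residue A u = 0 := Ideal.Quotient.eq_zero_iff_mem.mpr hu
    simp [map_mul, map_add, h0]
    rfl)

/-! Since `1 + m` consists of units, the valuation of `a ∈ A` only depends on the
multiplicative residue of `a`, so `v_A` factors through a monoid hom `MR(A) → Γ_A ∪ {0}` with
image in `{γ ≤ 1}`, and `γ ≤ δ` means `γ = v(c) δ` for some `c ∈ A`.
Composing with `τ` gives a multiplicative map `A → Γ_B ∪ {0}`, trivial on units and nonzero on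
nonzero elements, which extends to the fraction field and descends to a monotone hom
`Γ_A ∪ {0} → Γ_B ∪ {0}`. The hom built from `τ⁻¹` is inverse to it, because a multiplicative map
on `Γ_A ∪ {0}` is determined by its values on `v(A)`. -/

open ValuationRing

theorem IsLocalRing.isUnit_one_add_of_mem_maximalIdeal {A : Type*} [CommRing A] [IsLocalRing A]
    {u : A} (hu : u ∈ maximalIdeal A) : IsUnit (1 + u) := by
  simpa using isUnit_one_sub_self_of_mem_nonunits (-u) (neg_mem hu)

namespace MR

variable {A B : Type*} [CommRing A] [IsLocalRing A] [CommRing B] [IsLocalRing B]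

def mresHom : A →* MR A where
  toFun := mres
  map_one' := rfl
  map_mul' _ _ := rfl

theorem mul_mres_zero (x : MR A) : x * mres 0 = mres 0 := by
  induction x using Quot.ind
  exact congrArg mres (mul_zero _)

theorem map_mres_zero (τ : MR A ≃* MR B) : τ (mres 0) = mres 0 :=
  calc τ (mres 0) = τ (mres 0 * τ.symm (mres 0)) := by rw [mul_comm, mul_mres_zero]
    _ = mres 0 := by rw [map_mul, τ.apply_symm_apply, mul_mres_zero]

theorem eq_mres_zero_of_apply_eq_mres_zero (τ : MR A ≃* MR B) (x : MR A) (h : τ x = mres 0) :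
    x = mres 0 := by
  rw [← τ.symm_apply_apply x, h, map_mres_zero]

end MR

namespace ValuationRing

variable {A : Type*} [CommRing A] [IsDomain A] [ValuationRing A]
  (K : Type*) [Field K] [Algebra A K] [IsFractionRing A K]

theorem valuation_algebraMap_le_one (a : A) : valuation A K (algebraMap A K a) ≤ 1 :=
  (mem_integer_iff A K _).2 ⟨a, rfl⟩

theorem valuation_algebraMap_eq_zero_iff {a : A} :
    valuation A K (algebraMap A K a) = 0 ↔ a = 0 := by
  rw [Valuation.zero_iff, map_eq_zero_iff _ (IsFractionRing.injective A K)]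

theorem valuation_algebraMap_of_isUnit {a : A} (ha : IsUnit a) :
    valuation A K (algebraMap A K a) = 1 := by
  obtain ⟨u, rfl⟩ := ha
  exact Quotient.sound' ⟨u, by simp [Units.smul_def, Algebra.smul_def]⟩

end ValuationRing

namespace MR

variable {A : Type*} [CommRing A] [IsDomain A] [ValuationRing A]
  (K : Type*) [Field K] [Algebra A K] [IsFractionRing A K]

noncomputable def toValueGroup : MR A →* ValueGroup A K where
  toFun := Quot.lift (fun a => valuation A K (algebraMap A K a)) fun a _ ⟨u, hu, hb⟩ => by
    rw [hb, map_mul, map_mul, valuation_algebraMap_of_isUnit K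
      (isUnit_one_add_of_mem_maximalIdeal hu), mul_one]
  map_one' := by
    show valuation A K (algebraMap A K 1) = 1
    rw [map_one, map_one]
  map_mul' := by
    rintro ⟨a⟩ ⟨b⟩
    show valuation A K (algebraMap A K (a * b)) =
      valuation A K (algebraMap A K a) * valuation A K (algebraMap A K b)
    rw [map_mul, map_mul]

theorem toValueGroup_mres (a : A) :
    toValueGroup K (mres a) = valuation A K (algebraMap A K a) := rfl

theorem toValueGroup_le_one (x : MR A) : toValueGroup K x ≤ 1 := by
  induction x using Quot.ind
  exact valuation_algebraMap_le_one K _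

theorem toValueGroup_eq_zero_iff {x : MR A} : toValueGroup K x = 0 ↔ x = mres 0 := by
  refine ⟨fun h => ?_, fun h => by rw [h, toValueGroup_mres, map_zero, map_zero]⟩
  induction x using Quot.ind
  rw [← mres, toValueGroup_mres, valuation_algebraMap_eq_zero_iff] at h
  rw [h]
  rfl

theorem toValueGroup_eq_one_of_isUnit {x : MR A} (hx : IsUnit x) : toValueGroup K x = 1 := by
  obtain ⟨y, hxy⟩ := hx.exists_right_inv
  refine eq_one_of_one_le_mul_left (toValueGroup_le_one K x) (toValueGroup_le_one K y) ?_
  rw [← map_mul, hxy, map_one]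

end MR

namespace ValuationRing.ValueGroup

variable {A : Type*} [CommRing A] [IsDomain A] [ValuationRing A]
  {K : Type*} [Field K] [Algebra A K] [IsFractionRing A K]

theorem valuation_surjective : Function.Surjective (valuation A K) :=
  Quotient.mk''_surjective

theorem hom_ext {M : Type*} [Monoid M] {f g : ValueGroup A K →* M}
    (h : ∀ a : A, f (valuation A K (algebraMap A K a)) = g (valuation A K (algebraMap A K a))) :
    f = g := by
  ext γ
  obtain ⟨x, rfl⟩ := valuation_surjective γ
  obtain ⟨a, s, hs, rfl⟩ := IsFractionRing.div_surjective A x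
  have hs0 : algebraMap A K s ≠ 0 := IsFractionRing.to_map_ne_zero_of_mem_nonZeroDivisors hs
  have hvs : IsUnit (valuation A K (algebraMap A K s)) :=
    isUnit_iff_ne_zero.2 ((Valuation.ne_zero_iff _).2 hs0)
  refine (hvs.map f).mul_right_cancel ?_
  nth_rw 2 [h s]
  simp only [← map_mul, div_mul_cancel₀ _ hs0, h a]

theorem monotone_of_map_le_one {M : Type*} [Monoid M] [Preorder M] [MulRightMono M]
    (f : ValueGroup A K →* M) (h : ∀ a : A, f (valuation A K (algebraMap A K a)) ≤ 1) :
    Monotone f := by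
  rintro ⟨x⟩ ⟨y⟩ ⟨c, rfl⟩
  change f (valuation A K (c • y)) ≤ f (valuation A K y)
  rw [Algebra.smul_def, map_mul, map_mul]
  exact mul_le_of_le_one_left' (h c)

noncomputable def lift {M : Type*} [CommMonoid M] (F : A →* M)
    (hF : ∀ s : nonZeroDivisors A, IsUnit (F s)) (hF_units : ∀ u : Aˣ, F u = 1) :
    ValueGroup A K →* M :=
  let g := (IsLocalization.toLocalizationMap (nonZeroDivisors A) K).lift hF
  have hg (a : A) : g (algebraMap A K a) = F a :=
    (IsLocalization.toLocalizationMap (nonZeroDivisors A) K).lift_eq hF a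
  { toFun := Quotient.lift g fun _ y ⟨u, hu⟩ => by
      rw [← hu]
      change g ((u : A) • y) = g y
      rw [Algebra.smul_def, map_mul, hg, hF_units, one_mul]
    map_one' := g.map_one
    map_mul' := by
      rintro ⟨x⟩ ⟨y⟩
      exact g.map_mul x y }

theorem lift_valuation_algebraMap {M : Type*} [CommMonoid M] (F : A →* M)
    (hF : ∀ s : nonZeroDivisors A, IsUnit (F s)) (hF_units : ∀ u : Aˣ, F u = 1) (a : A) :
    lift (K := K) F hF hF_units (valuation A K (algebraMap A K a)) = F a :=
  (IsLocalization.toLocalizationMap (nonZeroDivisors A) K).lift_eq hF a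

end ValuationRing.ValueGroup

namespace ValuationRing.ValueGroup

variable {A B : Type*} [CommRing A] [IsDomain A] [ValuationRing A]
  [CommRing B] [IsDomain B] [ValuationRing B]
  {K L : Type*} [Field K] [Algebra A K] [IsFractionRing A K]
  [Field L] [Algebra B L] [IsFractionRing B L]

noncomputable def map (φ : MR A →* MR B) (hφ : ∀ x, φ x = mres 0 → x = mres 0) :
    ValueGroup A K →* ValueGroup B L :=
  lift ((MR.toValueGroup L).comp (φ.comp MR.mresHom))
    (fun s => isUnit_iff_ne_zero.2 fun h => nonZeroDivisors.ne_zero s.2 <|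
      (valuation_algebraMap_eq_zero_iff K).1 <|
        (MR.toValueGroup_eq_zero_iff K).2 (hφ _ ((MR.toValueGroup_eq_zero_iff L).1 h)))
    (fun u => MR.toValueGroup_eq_one_of_isUnit L (u.isUnit.map (φ.comp MR.mresHom)))

theorem map_toValueGroup (φ : MR A →* MR B) (hφ : ∀ x, φ x = mres 0 → x = mres 0)
    (x : MR A) : map φ hφ (MR.toValueGroup K x) = MR.toValueGroup L (φ x) := by
  induction x using Quot.ind
  exact lift_valuation_algebraMap _ _ _ _

theorem monotone_map (φ : MR A →* MR B) (hφ : ∀ x, φ x = mres 0 → x = mres 0) :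
    Monotone (map (K := K) (L := L) φ hφ) :=
  monotone_of_map_le_one _ fun a =>
    (map_toValueGroup φ hφ (mres a)).trans_le (MR.toValueGroup_le_one L _)

noncomputable def congr (τ : MR A ≃* MR B) : ValueGroup A K ≃*o ValueGroup B L :=
  have hτ : ∀ x, τ.toMonoidHom x = mres 0 → x = mres 0 :=
    MR.eq_mres_zero_of_apply_eq_mres_zero τ
  have hτ_symm : ∀ y, τ.symm.toMonoidHom y = mres 0 → y = mres 0 :=
    MR.eq_mres_zero_of_apply_eq_mres_zero τ.symm
  let e : ValueGroup A K ≃* ValueGroup B L :=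
    (map τ.toMonoidHom hτ).toMulEquiv (map (K := L) (L := K) τ.symm.toMonoidHom hτ_symm)
      (hom_ext fun a => by simp [← MR.toValueGroup_mres, map_toValueGroup])
      (hom_ext fun b => by simp [← MR.toValueGroup_mres, map_toValueGroup])
  { e with
    map_le_map_iff' := fun {x y} =>
      ⟨fun h => by
        have : e.symm (e x) ≤ e.symm (e y) := monotone_map (K := L) (L := K) _ hτ_symm h
        rwa [e.symm_apply_apply, e.symm_apply_apply] at this,
        fun h => monotone_map _ hτ h⟩ }

theorem congr_toValueGroup (τ : MR A ≃* MR B) (x : MR A) :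
    congr (K := K) (L := L) τ (MR.toValueGroup K x) = MR.toValueGroup L (τ x) :=
  map_toValueGroup (K := K) (L := L) τ.toMonoidHom (MR.eq_mres_zero_of_apply_eq_mres_zero τ) x

end ValuationRing.ValueGroup

open ValuationRing in
theorem valueGroup_orderIso_of_MR_iso_general
    {B : Type*} [CommRing B]
    [IsDomain A] [ValuationRing A] [IsDomain B] [ValuationRing B]
    (τ : MR A → MR B) (hbij : Function.Bijective τ)
    (hmul : ∀ x y : MR A, τ (x * y) = τ x * τ y) :
    ∃ e : ValueGroup A (FractionRing A) ≃*o ValueGroup B (FractionRing B),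
      ∀ (a : A) (b : B), τ (mres a) = mres b →
        e (valuation A (FractionRing A) (algebraMap A (FractionRing A) a)) =
          valuation B (FractionRing B) (algebraMap B (FractionRing B) b) := by
  let τ' : MR A ≃* MR B := MulEquiv.ofBijective (MulHom.mk τ hmul) hbij
  exact ⟨ValueGroup.congr τ', fun a b hab => (ValueGroup.congr_toValueGroup τ' (mres a)).trans
    (congrArg (MR.toValueGroup _) hab)⟩

open ValuationRing in
/-- If `A`, `B` are valuation rings and `τ : MR(A) → MR(B)` is a multiplicative bijection
compatible, via a field isomorphism of the residue fields, with the natural maps `s_A`,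
`s_B`, then `τ` induces an isomorphism of ordered (abelian) value groups of `Frac(A)` and
`Frac(B)`. -/
theorem valueGroup_orderIso_of_MR_iso
    {B : Type*} [CommRing B] [IsLocalRing B]
    [IsDomain A] [ValuationRing A] [IsDomain B] [ValuationRing B]
    (τ : MR A → MR B) (hbij : Function.Bijective τ)
    (hmul : ∀ x y : MR A, τ (x * y) = τ x * τ y)
    (hcompat : ∃ σ : (A ⧸ maximalIdeal A) ≃+* (B ⧸ maximalIdeal B),
      ∀ x : MR A, σ (sA x) = sA (τ x)) :
    ∃ e : ValueGroup A (FractionRing A) ≃*o ValueGroup B (FractionRing B),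
      ∀ (a : A) (b : B), τ (mres a) = mres b →
        e (valuation A (FractionRing A) (algebraMap A (FractionRing A) a)) =
          valuation B (FractionRing B) (algebraMap B (FractionRing B) b) :=
  valueGroup_orderIso_of_MR_iso_general τ hbij hmul
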